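/- arXiv:1212.3832 — 4 statements merged into one kernel-verified Lean document; each statement's English description precedes it below -/
import Mathlib

section
/- Let V be a separable real Banach space and let ξ be a σ-finite Borel measure on V satisfying: (i) ξ({v ∈ V : ‖v‖ > 1}) < ∞; (ii) ∫_{‖v‖≤1} ⟨v,v*⟩² ξ(dv) < ∞ for every v* ∈ V*; (iii) for every α > 0 there exists a Borel probability measure θ_α on V whose characteristic function satisfies ∫_V e^{i⟨v,v*⟩} θ_α(dv) = exp(−∫_V (1 − cos(α⁻¹⟨v,v*⟩)) (ξ + ξ⁻)(dv)) for all v* ∈ V*, where ξ⁻(A) := ξ(−A). Define Δ_ξ(v*) := ∫_V ⟨v,v*⟩ (1_{B_V}(v) − 1_{[−1,1]}(⟨v,v*⟩)) ξ(dv). Then for every sequence (vₙ*) in V* converging to 0 in the weak* topology one has Δ_ξ(vₙ*) → 0. -/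
/-!
By Banach–Steinhaus, `‖vₙ‖ ≤ C`. Off the unit ball the integrand of `Δ_ξ(vₙ)` is
`vₙ v · 1{|vₙ v| ≤ 1}`, bounded by `1` on a set of finite `ξ`-measure and tending to `0`
pointwise, so dominated convergence disposes of it. On the ball it is `vₙ v · 1{|vₙ v| > 1}`
with `1 < |vₙ v| ≤ C`; for `a = π / (C + 1)` this is at most
`C / (1 - cos a) · (1 - cos (a · vₙ v))`. The integral of `1 - cos (a · vₙ v)` against
`ξ + ξ⁻` is `-log` of the characteristic function of `θ_{1/a}` at `vₙ`, which tends to `1`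
by dominated convergence, so that integral tends to `0`.
-/

open MeasureTheory Filter Real Topology

theorem exists_norm_le_of_tendsto_apply {𝕜 E F : Type*} [NontriviallyNormedField 𝕜]
    [NormedAddCommGroup E] [NormedSpace 𝕜 E] [CompleteSpace E]
    [NormedAddCommGroup F] [NormedSpace 𝕜 F] {g : ℕ → E →L[𝕜] F} {f : E → F}
    (hg : ∀ x, Tendsto (fun n => g n x) atTop (𝓝 (f x))) : ∃ C, ∀ n, ‖g n‖ ≤ C :=
  banach_steinhaus fun x =>
    let ⟨C, hC⟩ := (hg x).norm.bddAbove_range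
    ⟨C, fun n => hC ⟨n, rfl⟩⟩

theorem Real.cos_mul_le_cos {a x : ℝ} (ha : 0 ≤ a) (hx : 1 ≤ |x|) (hax : a * |x| ≤ π) :
    cos (a * x) ≤ cos a := by
  rw [← cos_abs, abs_mul, abs_of_nonneg ha]
  exact cos_le_cos_of_nonneg_of_le_pi ha hax (le_mul_of_one_le_right ha hx)

theorem Real.abs_le_div_mul_one_sub_cos {a C x : ℝ} (ha : 0 < a) (haC : a * C ≤ π)
    (hx : 1 ≤ |x|) (hxC : |x| ≤ C) :
    |x| ≤ C / (1 - cos a) * (1 - cos (a * x)) := by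
  have hC : 0 ≤ C := (abs_nonneg x).trans hxC
  have ha_le : a ≤ π := by nlinarith
  have hδ : 0 < 1 - cos a := by
    linarith [cos_zero ▸ cos_lt_cos_of_nonneg_of_le_pi le_rfl ha_le ha]
  have hcos : cos (a * x) ≤ cos a :=
    cos_mul_le_cos ha.le hx ((mul_le_mul_of_nonneg_left hxC ha.le).trans haC)
  calc |x| ≤ C / (1 - cos a) * (1 - cos a) := by rwa [div_mul_cancel₀ _ hδ.ne']
    _ ≤ C / (1 - cos a) * (1 - cos (a * x)) := by gcongr

theorem tendsto_zero_of_tendsto_cexp_neg {ι : Type*} {l : Filter ι} {ψ : ι → ℝ}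
    (h : Tendsto (fun i => Complex.exp (-(ψ i : ℂ))) l (𝓝 1)) : Tendsto ψ l (𝓝 0) := by
  have hre : Tendsto (fun i => exp (-ψ i)) l (𝓝 1) := by
    simpa [Function.comp_def, ← Complex.ofReal_neg, ← Complex.ofReal_exp] using
      (Complex.continuous_re.tendsto _).comp h
  simpa using ((continuousAt_log one_ne_zero).tendsto.comp hre).neg

theorem tendsto_integral_cexp_I_mul {Ω : Type*} [MeasurableSpace Ω] (θ : Measure Ω)
    [IsProbabilityMeasure θ] {f : ℕ → Ω → ℝ} (hf : ∀ n, Measurable (f n))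
    (hlim : ∀ x, Tendsto (fun n => f n x) atTop (𝓝 0)) :
    Tendsto (fun n => ∫ x, Complex.exp (Complex.I * f n x) ∂θ) atTop (𝓝 1) := by
  simpa using tendsto_integral_of_dominated_convergence (μ := θ) (f := fun _ => 1) (fun _ => 1)
    (fun n => (by fun_prop : Measurable fun x => Complex.exp (Complex.I * f n x))
      |>.aestronglyMeasurable)
    (integrable_const 1) (fun n => ae_of_all _ fun x => by simp [Complex.norm_exp])
    (ae_of_all _ fun x => by
      simpa using (((Complex.continuous_ofReal.tendsto 0).comp (hlim x)).const_mul Complex.I).cexp)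

theorem tendsto_setIntegral_min_abs_one {Ω : Type*} [MeasurableSpace Ω] {μ : Measure Ω}
    {s : Set Ω} (hs : μ s ≠ ⊤) {f : ℕ → Ω → ℝ} (hf : ∀ n, Measurable (f n))
    (hlim : ∀ x, Tendsto (fun n => f n x) atTop (𝓝 0)) :
    Tendsto (fun n => ∫ x in s, min |f n x| 1 ∂μ) atTop (𝓝 0) := by
  have : IsFiniteMeasure (μ.restrict s) := isFiniteMeasure_restrict.2 hs
  simpa using tendsto_integral_of_dominated_convergence (μ := μ.restrict s) (f := fun _ => 0)
    (fun _ => 1)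
    (fun n => (by fun_prop : Measurable fun x => min |f n x| 1).aestronglyMeasurable)
    (integrable_const 1) (fun n => ae_of_all _ fun x => by simp [abs_of_nonneg])
    (ae_of_all _ fun x => by
      simpa using ((hlim x).abs.min tendsto_const_nhds : Tendsto _ _ (𝓝 (min |0| (1 : ℝ)))))

section LevyMeasure

variable {V : Type*} [NormedAddCommGroup V] [NormedSpace ℝ V]

theorem abs_mul_indicator_sub_indicator_le {a C : ℝ} (ha : 0 < a) (haC : a * C ≤ π)
    {w : V →L[ℝ] ℝ} (hw : ‖w‖ ≤ C) (v : V) :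
    |w v * ({v : V | ‖v‖ ≤ 1}.indicator (fun _ => (1 : ℝ)) v
      - {β : ℝ | |β| ≤ 1}.indicator (fun _ => (1 : ℝ)) (w v))|
      ≤ C / (1 - cos a) * (1 - cos (a * w v))
        + {v : V | 1 < ‖v‖}.indicator (fun v => min |w v| 1) v := by
  have hC : 0 ≤ C := (norm_nonneg w).trans hw
  have hcos : 0 ≤ C / (1 - cos a) * (1 - cos (a * w v)) := by
    have := cos_le_one a; have := cos_le_one (a * w v)
    positivity
  by_cases hv : ‖v‖ ≤ 1 <;> by_cases hx : |w v| ≤ 1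
  · simpa [hv, hx] using hcos
  · have hwv : |w v| ≤ C := by
      simpa using (w.le_opNorm v).trans (mul_le_mul hw hv (norm_nonneg v) hC)
    simpa [hv, hx] using abs_le_div_mul_one_sub_cos ha haC (not_le.1 hx).le hwv
  · simpa [hv, hx, not_le.1 hv] using hcos
  · simpa [hv, hx, not_le.1 hv] using add_nonneg hcos (le_min (abs_nonneg _) zero_le_one)

variable [MeasurableSpace V] [BorelSpace V] {ξ : Measure V}

theorem integrable_one_sub_cos_mul (h1 : ξ {v | 1 < ‖v‖} ≠ ⊤)
    (h2 : ∀ w : V →L[ℝ] ℝ, IntegrableOn (fun v => (w v) ^ 2) {v | ‖v‖ ≤ 1} ξ)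
    (a : ℝ) (w : V →L[ℝ] ℝ) : Integrable (fun v => 1 - cos (a * w v)) ξ := by
  have hmeas : AEStronglyMeasurable (fun v => 1 - cos (a * w v)) ξ :=
    (by fun_prop : Continuous fun v => 1 - cos (a * w v)).aestronglyMeasurable
  have hnonneg : ∀ v, 0 ≤ 1 - cos (a * w v) := fun v => sub_nonneg.2 (cos_le_one _)
  rw [← integrableOn_univ, ← Set.union_compl_self {v : V | ‖v‖ ≤ 1}]
  refine IntegrableOn.union ?_ ?_
  · refine ((h2 w).const_mul (a ^ 2 / 2)).mono' hmeas.restrict (ae_of_all _ fun v => ?_)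
    rw [Real.norm_of_nonneg (hnonneg v)]
    nlinarith [one_sub_sq_div_two_le_cos (x := a * w v)]
  · have hcompl : {v : V | ‖v‖ ≤ 1}ᶜ = {v | 1 < ‖v‖} := by ext; simp
    rw [hcompl]
    refine Measure.integrableOn_of_bounded (M := 2) h1 hmeas (ae_of_all _ fun v => ?_)
    rw [Real.norm_of_nonneg (hnonneg v)]
    linarith [neg_one_le_cos (a * w v)]

theorem integrable_map_neg_one_sub_cos_mul {a : ℝ} {w : V →L[ℝ] ℝ}
    (h : Integrable (fun v => 1 - cos (a * w v)) ξ) :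
    Integrable (fun v => 1 - cos (a * w v)) (ξ.map fun v => -v) := by
  rw [integrable_map_measure
    (by fun_prop : Continuous fun v => 1 - cos (a * w v)).aestronglyMeasurable
    measurable_neg.aemeasurable]
  simpa [Function.comp_def] using h

theorem integral_one_sub_cos_mul_le_symm (h1 : ξ {v | 1 < ‖v‖} ≠ ⊤)
    (h2 : ∀ w : V →L[ℝ] ℝ, IntegrableOn (fun v => (w v) ^ 2) {v | ‖v‖ ≤ 1} ξ)
    (a : ℝ) (w : V →L[ℝ] ℝ) :
    ∫ v, 1 - cos (a * w v) ∂ξ ≤ ∫ v, 1 - cos (a * w v) ∂(ξ + ξ.map fun v => -v) := by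
  have h := integrable_one_sub_cos_mul h1 h2 a w
  exact integral_mono_measure (Measure.le_add_right le_rfl)
    (ae_of_all _ fun v => sub_nonneg.2 (cos_le_one _))
    (h.add_measure (integrable_map_neg_one_sub_cos_mul h))

theorem tendsto_integral_one_sub_cos_mul_of_charFun (ν : Measure V) {a : ℝ} (θ : Measure V)
    [IsProbabilityMeasure θ]
    (hθ : ∀ w : V →L[ℝ] ℝ, ∫ v, Complex.exp (Complex.I * w v) ∂θ
      = Complex.exp (-((∫ v, 1 - cos (a * w v) ∂ν : ℝ) : ℂ)))
    {ws : ℕ → V →L[ℝ] ℝ} (hws : ∀ v, Tendsto (fun n => ws n v) atTop (𝓝 0)) :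
    Tendsto (fun n => ∫ v, 1 - cos (a * ws n v) ∂ν) atTop (𝓝 0) :=
  tendsto_zero_of_tendsto_cexp_neg <| by
    simpa only [hθ] using
      tendsto_integral_cexp_I_mul θ (fun n => (ws n).continuous.measurable) hws

/-- The correction term `Δ_ξ`. -/
noncomputable def levyCorrection (ξ : Measure V) (w : V →L[ℝ] ℝ) : ℝ :=
  ∫ v, w v * ({v : V | ‖v‖ ≤ 1}.indicator (fun _ => (1 : ℝ)) v
    - {β : ℝ | |β| ≤ 1}.indicator (fun _ => (1 : ℝ)) (w v)) ∂ξ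

theorem abs_levyCorrection_le (h1 : ξ {v | 1 < ‖v‖} ≠ ⊤)
    (h2 : ∀ w : V →L[ℝ] ℝ, IntegrableOn (fun v => (w v) ^ 2) {v | ‖v‖ ≤ 1} ξ)
    {a C : ℝ} (ha : 0 < a) (haC : a * C ≤ π) {w : V →L[ℝ] ℝ} (hw : ‖w‖ ≤ C) :
    |levyCorrection ξ w| ≤ C / (1 - cos a) * ∫ v, 1 - cos (a * w v) ∂ξ
      + ∫ v in {v | 1 < ‖v‖}, min |w v| 1 ∂ξ := by
  have hout : MeasurableSet {v : V | 1 < ‖v‖} := measurableSet_lt measurable_const measurable_norm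
  have hmin : IntegrableOn (fun v => min |w v| 1) {v | 1 < ‖v‖} ξ :=
    Measure.integrableOn_of_bounded (M := 1) h1
      (by fun_prop : Continuous fun v => min |w v| 1).aestronglyMeasurable
      (ae_of_all _ fun v => by simp [abs_of_nonneg])
  calc |levyCorrection ξ w|
      ≤ ∫ v, C / (1 - cos a) * (1 - cos (a * w v))
          + {v : V | 1 < ‖v‖}.indicator (fun v => min |w v| 1) v ∂ξ := by
        rw [← Real.norm_eq_abs]
        exact norm_integral_le_of_norm_le
            (((integrable_one_sub_cos_mul h1 h2 a w).const_mul _).add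
              (hmin.integrable_indicator hout))
            (ae_of_all _ (abs_mul_indicator_sub_indicator_le ha haC hw))
    _ = _ := by
        rw [integral_add ((integrable_one_sub_cos_mul h1 h2 a w).const_mul _)
          (hmin.integrable_indicator hout), integral_const_mul, integral_indicator hout]

end LevyMeasure

theorem stmt2_general
    (V : Type*) [NormedAddCommGroup V] [NormedSpace ℝ V] [CompleteSpace V]
    [MeasurableSpace V] [BorelSpace V]
    (ξ : Measure V)
    (h1 : ξ {v : V | 1 < ‖v‖} < ⊤)
    (h2 : ∀ w : V →L[ℝ] ℝ, IntegrableOn (fun v => (w v) ^ 2) {v : V | ‖v‖ ≤ 1} ξ)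
    (h3 : ∀ α : ℝ, 0 < α → ∃ θ : Measure V, IsProbabilityMeasure θ ∧
      ∀ w : V →L[ℝ] ℝ,
        (∫ v, Complex.exp (Complex.I * (w v : ℂ)) ∂θ)
          = Complex.exp (-((∫ v, (1 - Real.cos (α⁻¹ * w v))
              ∂(ξ + ξ.map (fun v => -v)) : ℝ) : ℂ)))
    (vs : ℕ → V →L[ℝ] ℝ)
    (hvs : ∀ v : V, Tendsto (fun n => vs n v) atTop (nhds 0)) :
    Tendsto
      (fun n => ∫ v, (vs n v) *
        (Set.indicator {v : V | ‖v‖ ≤ 1} (fun _ => (1 : ℝ)) v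
          - Set.indicator {β : ℝ | |β| ≤ 1} (fun _ => (1 : ℝ)) (vs n v)) ∂ξ)
      atTop (nhds 0) := by
  show Tendsto (fun n => levyCorrection ξ (vs n)) atTop (𝓝 0)
  obtain ⟨C, hC⟩ := exists_norm_le_of_tendsto_apply hvs
  have hC1 : 0 < C + 1 := by linarith [(norm_nonneg _).trans (hC 0)]
  set a := π / (C + 1)
  have ha : 0 < a := div_pos pi_pos hC1
  have haC : a * C ≤ π := by
    rw [div_mul_eq_mul_div, div_le_iff₀ hC1]; nlinarith [pi_pos]
  obtain ⟨θ, hθ, hθchar⟩ := h3 a⁻¹ (inv_pos.2 ha)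
  simp only [inv_inv] at hθchar
  have hcos : Tendsto (fun n => ∫ v, 1 - cos (a * vs n v) ∂ξ) atTop (𝓝 0) :=
    squeeze_zero (fun n => integral_nonneg fun v => sub_nonneg.2 (cos_le_one _))
      (fun n => integral_one_sub_cos_mul_le_symm h1.ne h2 a (vs n))
      (tendsto_integral_one_sub_cos_mul_of_charFun _ θ hθchar hvs)
  have hout := tendsto_setIntegral_min_abs_one h1.ne (fun n => (vs n).continuous.measurable) hvs
  refine squeeze_zero_norm (fun n => abs_levyCorrection_le h1.ne h2 ha haC (hC n)) ?_
  simpa using (hcos.const_mul _).add hout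

/-- Weak*-sequential continuity at 0 of the correction term `Δ_ξ` between the classical
and the cylindrical Lévy–Khintchine formula, for a σ-finite Borel measure `ξ` enjoying
the properties of a Lévy measure on a separable Banach space. -/
theorem stmt2
    (V : Type*) [NormedAddCommGroup V] [NormedSpace ℝ V] [CompleteSpace V]
    [TopologicalSpace.SeparableSpace V] [MeasurableSpace V] [BorelSpace V]
    (ξ : Measure V) [SigmaFinite ξ]
    (h1 : ξ {v : V | 1 < ‖v‖} < ⊤)
    (h2 : ∀ w : V →L[ℝ] ℝ, IntegrableOn (fun v => (w v) ^ 2) {v : V | ‖v‖ ≤ 1} ξ)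
    (h3 : ∀ α : ℝ, 0 < α → ∃ θ : Measure V, IsProbabilityMeasure θ ∧
      ∀ w : V →L[ℝ] ℝ,
        (∫ v, Complex.exp (Complex.I * (w v : ℂ)) ∂θ)
          = Complex.exp (-((∫ v, (1 - Real.cos (α⁻¹ * w v))
              ∂(ξ + ξ.map (fun v => -v)) : ℝ) : ℂ)))
    (vs : ℕ → V →L[ℝ] ℝ)
    (hvs : ∀ v : V, Tendsto (fun n => vs n v) atTop (nhds 0)) :
    Tendsto
      (fun n => ∫ v, (vs n v) *
        (Set.indicator {v : V | ‖v‖ ≤ 1} (fun _ => (1 : ℝ)) v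
          - Set.indicator {β : ℝ | |β| ≤ 1} (fun _ => (1 : ℝ)) (vs n v)) ∂ξ)
      atTop (nhds 0) :=
  stmt2_general V ξ h1 h2 h3 vs hvs
end

section
/- Let 0 < α < 2, T > 0, (σ_k)_{k∈ℕ} a sequence of real numbers, and (γ_k)_{k∈ℕ} a sequence of strictly negative real numbers with γ_k → −∞ as k → ∞. Then Σ_{k=1}^∞ ∫₀^T ∫_ℝ (e^{2γ_k s} σ_k² β² ∧ 1) · (1/2)|β|^{−1−α} dβ ds < ∞ if and only if Σ_{k=1}^∞ |σ_k|^α / |γ_k| < ∞. -/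
/-!
Scaling `β ↦ β / s` shows that `∫ min ((s β)²) 1 · ½|β|^{-1-α} dβ` equals `s^α` times a
constant, finite exactly because `0 < α < 2`. With `s = e^{γ_k t} |σ_k|` the double integral is
therefore an explicit multiple of `|σ_k|^α (1 - e^{α γ_k T}) / |γ_k|`, and the last factor tends
to `1` since `γ_k → -∞`, so the two series are comparable.
-/

open MeasureTheory Filter Set Asymptotics Real Topology

lemma integral_Ioi_min_sq_one_mul_rpow {α : ℝ} (hα0 : 0 < α) (hα2 : α < 2) :
    ∫ u in Ioi (0 : ℝ), min (u ^ 2) 1 * u ^ (-1 - α) = 1 / (2 - α) + 1 / α := by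
  have h_small : ∀ u ∈ Ioc (0 : ℝ) 1, min (u ^ 2) 1 * u ^ (-1 - α) = u ^ (1 - α) := by
    rintro u ⟨hu0, hu1⟩
    rw [min_eq_left (pow_le_one₀ hu0.le hu1), ← rpow_two, ← rpow_add hu0]
    ring_nf
  have h_large : ∀ u ∈ Ioi (1 : ℝ), min (u ^ 2) 1 * u ^ (-1 - α) = u ^ (-1 - α) := by
    intro u hu
    rw [min_eq_right (one_le_pow₀ (le_of_lt hu)), one_mul]
  have int_small : IntegrableOn (fun u : ℝ => u ^ (1 - α)) (Ioc 0 1) :=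
    (intervalIntegrable_iff_integrableOn_Ioc_of_le zero_le_one).1
      (intervalIntegral.intervalIntegrable_rpow' (by linarith))
  have int_large : IntegrableOn (fun u : ℝ => u ^ (-1 - α)) (Ioi 1) :=
    integrableOn_Ioi_rpow_of_lt (by linarith) zero_lt_one
  rw [← Ioc_union_Ioi_eq_Ioi zero_le_one,
    setIntegral_union (Ioc_disjoint_Ioi le_rfl) measurableSet_Ioi
      (int_small.congr_fun (fun u hu => (h_small u hu).symm) measurableSet_Ioc)
      (int_large.congr_fun (fun u hu => (h_large u hu).symm) measurableSet_Ioi),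
    setIntegral_congr_fun measurableSet_Ioc h_small,
    setIntegral_congr_fun measurableSet_Ioi h_large,
    ← intervalIntegral.integral_of_le zero_le_one, integral_rpow (Or.inl (by linarith)),
    integral_Ioi_rpow_of_lt (by linarith) zero_lt_one]
  rw [zero_rpow (by linarith), one_rpow, one_rpow]
  ring_nf

lemma integral_Ioi_min_mul_sq_one_mul_rpow {α s : ℝ} (hα0 : 0 < α) (hα2 : α < 2)
    (hs : 0 ≤ s) :
    ∫ u in Ioi (0 : ℝ), min ((s * u) ^ 2) 1 * u ^ (-1 - α)
      = s ^ α * (1 / (2 - α) + 1 / α) := by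
  rcases hs.eq_or_lt with rfl | hs_pos
  · simp [zero_rpow hα0.ne']
  have h_scale := integral_comp_mul_left_Ioi (fun u => min (u ^ 2) 1 * u ^ (-1 - α)) 0 hs_pos
  rw [mul_zero, integral_Ioi_min_sq_one_mul_rpow hα0 hα2, smul_eq_mul,
    setIntegral_congr_fun measurableSet_Ioi (g := fun u => (s ^ α * s)⁻¹ *
      (min ((s * u) ^ 2) 1 * u ^ (-1 - α))) (fun u hu => by
        simp only
        rw [mul_rpow hs (le_of_lt hu), show -1 - α = -(α + 1) by ring, rpow_neg hs,
          rpow_add_one hs_pos.ne']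
        ring),
    integral_const_mul] at h_scale
  rw [inv_mul_eq_iff_eq_mul₀ (by positivity)] at h_scale
  rw [h_scale]
  field_simp

lemma integral_min_mul_sq_one_mul_stableLevyDensity {α s : ℝ} (hα0 : 0 < α) (hα2 : α < 2)
    (hs : 0 ≤ s) :
    ∫ β : ℝ, (if β = 0 then 0 else min ((s * β) ^ 2) 1 * (1 / 2 * |β| ^ (-1 - α)))
      = s ^ α * (1 / (2 - α) + 1 / α) := by
  let f : ℝ → ℝ := fun t => if t = 0 then 0 else min ((s * t) ^ 2) 1 * (1 / 2 * t ^ (-1 - α))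
  have h_even : ∀ β : ℝ, (if β = 0 then 0 else min ((s * β) ^ 2) 1 * (1 / 2 * |β| ^ (-1 - α)))
      = f |β| := by
    intro β
    simp only [f, abs_eq_zero, mul_pow, sq_abs]
  have h_pos : ∀ t ∈ Ioi (0 : ℝ), f t = 1 / 2 * (min ((s * t) ^ 2) 1 * t ^ (-1 - α)) := by
    intro t ht
    simp only [f, if_neg (ne_of_gt (mem_Ioi.1 ht))]
    ring
  simp_rw [h_even]
  rw [integral_comp_abs, setIntegral_congr_fun measurableSet_Ioi h_pos, integral_const_mul,
    integral_Ioi_min_mul_sq_one_mul_rpow hα0 hα2 hs]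
  ring

lemma integral_Icc_exp_mul {a T : ℝ} (ha : a ≠ 0) (hT : 0 ≤ T) :
    ∫ s in Icc 0 T, exp (a * s) = (exp (a * T) - 1) / a := by
  rw [integral_Icc_eq_integral_Ioc, ← intervalIntegral.integral_of_le hT,
    intervalIntegral.integral_comp_mul_left (fun u => exp u) ha, integral_exp, mul_zero,
    exp_zero, smul_eq_mul]
  field_simp

lemma integral_Icc_integral_min_exp_mul_sq_one {α T σ γ : ℝ} (hα0 : 0 < α) (hα2 : α < 2)
    (hT : 0 ≤ T) (hγ : γ < 0) :
    ∫ s in Icc 0 T, ∫ β : ℝ, (if β = 0 then 0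
        else min (exp (2 * γ * s) * σ ^ 2 * β ^ 2) 1 * (1 / 2 * |β| ^ (-1 - α)))
      = (1 / (2 - α) + 1 / α) / α * (|σ| ^ α / |γ| * (1 - exp (α * γ * T))) := by
  have h_square : ∀ s β : ℝ, exp (2 * γ * s) * σ ^ 2 * β ^ 2 = (exp (γ * s) * |σ| * β) ^ 2 := by
    intro s β
    rw [mul_pow, mul_pow, sq_abs, ← exp_nat_mul]
    ring_nf
  have h_inner : ∀ s : ℝ, (exp (γ * s) * |σ|) ^ α * (1 / (2 - α) + 1 / α)
      = (1 / (2 - α) + 1 / α) * |σ| ^ α * exp (α * γ * s) := by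
    intro s
    rw [mul_rpow (exp_pos _).le (abs_nonneg σ), ← exp_mul, mul_comm (γ * s) α, ← mul_assoc]
    ring
  simp_rw [h_square, integral_min_mul_sq_one_mul_stableLevyDensity hα0 hα2
    (mul_nonneg (exp_pos _).le (abs_nonneg σ)), h_inner]
  rw [integral_const_mul,
    integral_Icc_exp_mul (mul_ne_zero hα0.ne' hγ.ne) hT, abs_of_neg hγ]
  field_simp
  ring

lemma summable_mul_iff_of_tendsto_one {f u : ℕ → ℝ} (hu : Tendsto u atTop (𝓝 1)) :
    Summable (fun k => f k * u k) ↔ Summable f := by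
  have h : (f * u) ~[atTop] (f * fun _ => 1) :=
    IsEquivalent.refl.mul ((isEquivalent_const_iff_tendsto one_ne_zero).2 hu)
  simpa only [Pi.mul_def, mul_one] using h.summable_iff_nat

/-- The stochastic integrability criterion for a diagonal semigroup with eigenvalues
`e^{γ_k t}`, `γ_k < 0`, `γ_k → −∞`, with respect to an α-stable cylindrical noise with
coefficients `σ_k`, is equivalent to `Σ |σ_k|^α / |γ_k| < ∞`. -/
theorem stmt9 (α T : ℝ) (hα0 : 0 < α) (hα2 : α < 2) (hT : 0 < T)
    (σ γ : ℕ → ℝ) (hγ : ∀ k, γ k < 0) (hγ' : Tendsto γ atTop atBot) :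
    (Summable fun k => ∫ s in Set.Icc (0 : ℝ) T, ∫ β : ℝ,
        (if β = 0 then 0
          else min (Real.exp (2 * γ k * s) * (σ k) ^ 2 * β ^ 2) 1
            * (1 / 2 * |β| ^ (-1 - α))))
      ↔ Summable fun k => |σ k| ^ α / |γ k| := by
  have h_decay : Tendsto (fun k => 1 - exp (α * γ k * T)) atTop (𝓝 1) := by
    have h_exp := tendsto_exp_atBot.comp ((hγ'.const_mul_atBot hα0).atBot_mul_const hT)
    simpa using tendsto_const_nhds.sub h_exp
  have h_const : (1 / (2 - α) + 1 / α) / α ≠ 0 := by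
    have : 0 < 2 - α := by linarith
    positivity
  simp_rw [integral_Icc_integral_min_exp_mul_sq_one hα0 hα2 hT.le (hγ _)]
  rw [summable_mul_left_iff h_const, summable_mul_iff_of_tendsto_one h_decay]
end

section
/- Let (X, Σ, ξ) be a measure space, m ∈ ℕ, and c : X → ℝᵐ a measurable function. Let γᵐ denote the standard Gaussian measure on ℝᵐ (the m-fold product of the standard normal distribution on ℝ). Then ∫_{ℝᵐ} ∫_X ( (Σ_{k=1}^m β_k c_k(x))² ∧ 1 ) ξ(dx) γᵐ(dβ) ≤ ∫_X ( (Σ_{k=1}^m c_k(x)²) ∧ 1 ) ξ(dx), where x ∧ y denotes min(x,y). -/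
open MeasureTheory ProbabilityTheory

open scoped ENNReal

/-! For fixed `a`, the linear form `⟪β, a⟫` has second moment `‖a‖²` under the standard Gaussian,
and since `t ↦ t ∧ 1` is concave, averaging `⟪β, a⟫² ∧ 1` over `β` gives at most `‖a‖² ∧ 1`.
It remains to integrate this in `x` after exchanging the integrals. Tonelli needs σ-finiteness,
which `ξ` need not have; but the right-hand side may be assumed finite, so `x ↦ ‖c x‖² ∧ 1` is
integrable and hence vanishes outside a set on which `ξ` is σ-finite, and outside that set the
integrand vanishes for every `β`. -/

lemma lintegral_min_one_le {Ω : Type*} [MeasurableSpace Ω] (μ : Measure Ω)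
    [IsZeroOrProbabilityMeasure μ] (f : Ω → ℝ≥0∞) :
    ∫⁻ ω, min (f ω) 1 ∂μ ≤ min (∫⁻ ω, f ω ∂μ) 1 :=
  le_min (lintegral_mono fun _ ↦ min_le_left _ _)
    ((lintegral_mono fun _ ↦ min_le_right _ _).trans (by simpa using prob_le_one))

section Gaussian

variable {ι : Type*} [Fintype ι]

lemma lintegral_sq_sum_mul_gaussianReal (a : ι → ℝ) :
    ∫⁻ β : ι → ℝ, ENNReal.ofReal ((∑ k, β k * a k) ^ 2)
        ∂(Measure.pi fun _ ↦ gaussianReal 0 1) = ENNReal.ofReal (∑ k, a k ^ 2) := by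
  set L : (ι → ℝ) → ℝ := ∑ k, fun β ↦ a k * β k
  have hL : ∀ β, L β = ∑ k, β k * a k := fun β ↦ by simp [L, mul_comm]
  have hmemLp : ∀ k, MemLp (fun x : ℝ ↦ a k * x) 2 (gaussianReal 0 1) :=
    fun k ↦ (memLp_id_gaussianReal 2).const_mul (a k)
  -- `L` is centred, so its second moment is its variance, additive over independent coordinates.
  have hmean : ∫ β, L β ∂(Measure.pi fun _ ↦ gaussianReal 0 1) = 0 := by
    simp only [L, Finset.sum_apply]
    rw [integral_finsetSum _ fun k _ ↦ (integrable_eval IsGaussian.integrable_id).const_mul _]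
    simp [integral_const_mul, integral_eval]
  have hvar : Var[L; Measure.pi fun _ ↦ gaussianReal 0 1] = ∑ k, a k ^ 2 := by
    rw [variance_sum_pi hmemLp]
    simp [variance_const_mul _ (fun x : ℝ ↦ x), variance_fun_id_gaussianReal]
  have hLmemLp : MemLp L 2 (Measure.pi fun _ ↦ gaussianReal 0 1) :=
    memLp_finsetSum' _ fun k _ ↦ (hmemLp k).comp_measurePreserving (measurePreserving_eval _ k)
  rw [← hvar, hLmemLp.ofReal_variance_eq, evariance_eq_lintegral_ofReal, hmean]
  simp [hL]

lemma lintegral_min_sq_sum_mul_gaussianReal_le (a : ι → ℝ) :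
    ∫⁻ β : ι → ℝ, ENNReal.ofReal (min ((∑ k, β k * a k) ^ 2) 1)
        ∂(Measure.pi fun _ ↦ gaussianReal 0 1) ≤ ENNReal.ofReal (min (∑ k, a k ^ 2) 1) := by
  simp only [ENNReal.ofReal_min, ENNReal.ofReal_one]
  exact (lintegral_min_one_le _ _).trans_eq (by rw [lintegral_sq_sum_mul_gaussianReal])

end Gaussian

lemma lintegral_lintegral_swap_of_sigmaFinite_support {α β : Type*} [MeasurableSpace α]
    [MeasurableSpace β] {μ : Measure α} [SFinite μ] {ν : Measure β} {f : α → β → ℝ≥0∞}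
    (hf : Measurable (Function.uncurry f)) {s : Set β} [SigmaFinite (ν.restrict s)]
    (hfs : ∀ a, ∀ b ∉ s, f a b = 0) :
    ∫⁻ a, ∫⁻ b, f a b ∂ν ∂μ = ∫⁻ b, ∫⁻ a, f a b ∂μ ∂ν := by
  have hsupp : ∀ a, (f a).support ⊆ s := fun a ↦ Function.support_subset_iff'.2 (hfs a)
  calc ∫⁻ a, ∫⁻ b, f a b ∂ν ∂μ = ∫⁻ a, ∫⁻ b in s, f a b ∂ν ∂μ := by
        simp_rw [setLIntegral_eq_of_support_subset (hsupp _)]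
    _ = ∫⁻ b in s, ∫⁻ a, f a b ∂μ ∂ν := lintegral_lintegral_swap hf.aemeasurable
    _ = ∫⁻ b, ∫⁻ a, f a b ∂μ ∂ν := by
        refine setLIntegral_eq_of_support_subset (Function.support_subset_iff'.2 fun b hb ↦ ?_)
        simp [hfs _ b hb]

lemma exists_sigmaFinite_restrict_of_lintegral_ne_top {α : Type*} [MeasurableSpace α]
    {μ : Measure α} {f : α → ℝ≥0∞} (hf : Measurable f) (hf_ne_top : ∀ x, f x ≠ ∞)
    (hint : ∫⁻ x, f x ∂μ ≠ ∞) :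
    ∃ t, (∀ x ∉ t, f x = 0) ∧ SigmaFinite (μ.restrict t) := by
  obtain ⟨t, -, ht, hσ⟩ := ((mem_L1_toReal_of_lintegral_ne_top hf.aemeasurable hint)
    |>.finStronglyMeasurable_of_stronglyMeasurable hf.ennreal_toReal.stronglyMeasurable
      one_ne_zero ENNReal.one_ne_top).exists_set_sigmaFinite
  exact ⟨t, fun x hx ↦ ((ENNReal.toReal_eq_zero_iff _).1 (ht x hx)).resolve_right (hf_ne_top x), hσ⟩

/-- Gaussian averaging bound: averaging `(Σ β_k c_k(x))² ∧ 1` over a standard Gaussian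
vector `β` is dominated by `(Σ c_k(x)²) ∧ 1`. -/
theorem stmt11
    {X : Type*} [MeasurableSpace X] (ξ : Measure X) (m : ℕ)
    (c : X → Fin m → ℝ) (hc : Measurable c) :
    ∫⁻ β : Fin m → ℝ,
        (∫⁻ x, ENNReal.ofReal (min ((∑ k, β k * c x k) ^ 2) 1) ∂ξ)
          ∂(Measure.pi fun _ : Fin m => gaussianReal 0 1)
      ≤ ∫⁻ x, ENNReal.ofReal (min (∑ k, (c x k) ^ 2) 1) ∂ξ := by
  by_cases hint : ∫⁻ x, ENNReal.ofReal (min (∑ k, (c x k) ^ 2) 1) ∂ξ = ∞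
  · rw [hint]; exact le_top
  obtain ⟨t, ht, _⟩ := exists_sigmaFinite_restrict_of_lintegral_ne_top (by fun_prop)
    (fun _ ↦ ENNReal.ofReal_ne_top) hint
  have hc_zero : ∀ x ∉ t, c x = 0 := by
    intro x hx
    have hsum : ∑ k, c x k ^ 2 = 0 :=
      le_antisymm (by simpa using ht x hx) (by positivity)
    funext k
    exact pow_eq_zero_iff two_ne_zero |>.1 <|
      congrFun ((Fintype.sum_eq_zero_iff_of_nonneg fun k ↦ sq_nonneg (c x k)).1 hsum) k
  rw [lintegral_lintegral_swap_of_sigmaFinite_support (by fun_prop) (s := t)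
    fun β x hx ↦ by simp [hc_zero x hx]]
  exact lintegral_mono fun x ↦ lintegral_min_sq_sum_mul_gaussianReal_le (c x)
end

section
/- Let U be a separable real Banach space and let σ be a Borel measure on U such that ∫_U (⟨u,u*⟩² ∧ 1) σ(du) < ∞ for every continuous linear functional u* on U, and such that the map u* ↦ ∫_U (1 − cos⟨u,u*⟩) σ(du) is continuous at 0 with respect to the dual norm on U*. Then for every ε > 0 there exists δ > 0 such that sup_{‖u*‖ ≤ δ} ∫_U (⟨u,u*⟩² ∧ 1) σ(du) ≤ ε. -/
/-!
Since `min (x ^ 2) 1 ≤ 20 * (1 - sinc x) = 20 * ∫ t in 0..1, (1 - cos (t * x))`, Fubini bounds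
`∫ min (⟨u, w⟩ ^ 2) 1 dσ` by twenty times the average of the symbol over the segment `[0, w]`
of the dual space, and continuity of the symbol at `0` makes that average small once `‖w‖` is.
-/

open MeasureTheory Real Set Filter

lemma sin_le_mul_one_sub_sq_div {x : ℝ} (hx₀ : 0 ≤ x) (hx₂ : x ≤ 2) :
    sin x ≤ x * (1 - x ^ 2 / 20) := by
  have hπ : π ^ 2 < 10 := by nlinarith [pi_lt_d2, pi_pos]
  have hsin : 0 ≤ sin (x / 2) :=
    sin_nonneg_of_nonneg_of_le_pi (by linarith) (by linarith [pi_gt_three])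
  have hcos : cos (x / 2) ≤ 1 - 2 / π ^ 2 * (x / 2) ^ 2 :=
    cos_le_one_sub_mul_cos_sq (by rw [abs_of_nonneg (by linarith)]; linarith [pi_gt_three])
  have hcos' : 1 - 2 / π ^ 2 * (x / 2) ^ 2 ≤ 1 - x ^ 2 / 20 := by
    rw [show 2 / π ^ 2 * (x / 2) ^ 2 = x ^ 2 / (2 * π ^ 2) by ring]
    gcongr
    linarith
  -- `sin x = 2 sin (x/2) cos (x/2)` with `sin (x/2) ≤ x/2` and the quadratic bound on `cos`
  rw [← mul_div_cancel₀ x (two_ne_zero' ℝ), sin_two_mul, mul_div_cancel₀ x (two_ne_zero' ℝ)]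
  rcases le_total 0 (cos (x / 2)) with hc | hc
  · nlinarith [sin_le (by linarith : 0 ≤ x / 2)]
  · nlinarith

lemma min_sq_one_le_one_sub_sinc (x : ℝ) : min (x ^ 2) 1 ≤ 20 * (1 - sinc x) := by
  wlog hx : 0 ≤ x generalizing x
  · simpa using this (-x) (by linarith)
  rcases hx.eq_or_lt with rfl | hx
  · simp
  rw [sinc_of_ne_zero hx.ne']
  rcases le_total x 2 with hx₂ | hx₂
  · have := sin_le_mul_one_sub_sq_div hx.le hx₂
    have : sin x / x ≤ 1 - x ^ 2 / 20 := by rwa [div_le_iff₀ hx, mul_comm]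
    linarith [min_le_left (x ^ 2) 1]
  · have := sin_div_le_inv_abs x
    rw [abs_of_pos hx] at this
    have : x⁻¹ ≤ 1 / 2 := by rw [inv_le_comm₀ hx (by norm_num)]; linarith
    linarith [min_le_right (x ^ 2) 1]

lemma integral_one_sub_cos_mul (x : ℝ) : ∫ t in (0 : ℝ)..1, (1 - cos (t * x)) = 1 - sinc x := by
  rcases eq_or_ne x 0 with rfl | hx
  · simp
  rw [intervalIntegral.integral_sub intervalIntegrable_const
    ((by fun_prop : Continuous fun t : ℝ => cos (t * x)).intervalIntegrable 0 1),
    intervalIntegral.integral_comp_mul_right cos hx, integral_cos, sinc_of_ne_zero hx]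
  simp [div_eq_inv_mul]

lemma one_sub_cos_le_two_mul_min_sq_one (x : ℝ) : 1 - cos x ≤ 2 * min (x ^ 2) 1 := by
  rw [mul_min_of_nonneg _ _ zero_le_two]
  exact le_min (by nlinarith [one_sub_sq_div_two_le_cos (x := x), sq_nonneg x])
    (by linarith [neg_one_le_cos x])

lemma one_sub_cos_mul_le_two_mul_min_sq_one {t : ℝ} (ht : |t| ≤ 1) (x : ℝ) :
    1 - cos (t * x) ≤ 2 * min (x ^ 2) 1 := by
  have : (t * x) ^ 2 ≤ x ^ 2 := by
    rw [mul_pow]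
    nlinarith [(sq_le_one_iff_abs_le_one t).mpr ht, sq_nonneg x]
  exact (one_sub_cos_le_two_mul_min_sq_one _).trans (by gcongr)

section

variable {α : Type*} [MeasurableSpace α] {μ : Measure α} {f : α → ℝ}

lemma MeasureTheory.Integrable.one_sub_cos_mul (hf : Measurable f)
    (hint : Integrable (fun a ↦ min (f a ^ 2) 1) μ) {t : ℝ} (ht : |t| ≤ 1) :
    Integrable (fun a ↦ 1 - cos (t * f a)) μ :=
  (hint.const_mul 2).mono' (by fun_prop) <| .of_forall fun a ↦ by
    rw [Real.norm_of_nonneg (by linarith [cos_le_one (t * f a)])]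
    exact one_sub_cos_mul_le_two_mul_min_sq_one ht (f a)

lemma integral_min_sq_one_le_setIntegral_integral_one_sub_cos [SFinite μ] (hf : Measurable f)
    (hint : Integrable (fun a ↦ min (f a ^ 2) 1) μ) :
    ∫ a, min (f a ^ 2) 1 ∂μ ≤ 20 * ∫ t in Ioc (0 : ℝ) 1, ∫ a, (1 - cos (t * f a)) ∂μ := by
  set ν := volume.restrict (Ioc (0 : ℝ) 1)
  have hprod : Integrable (Function.uncurry fun a t ↦ 1 - cos (t * f a)) (μ.prod ν) := by
    refine ((hint.const_mul 2).mul_prod (integrable_const (1 : ℝ))).mono' (by fun_prop) ?_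
    filter_upwards [Measure.quasiMeasurePreserving_snd.ae (ae_restrict_mem measurableSet_Ioc)]
      with ⟨a, t⟩ ⟨ht₀, ht₁⟩
    rw [Function.uncurry_apply_pair, Real.norm_of_nonneg (by linarith [cos_le_one (t * f a)]),
      mul_one]
    exact one_sub_cos_mul_le_two_mul_min_sq_one (abs_le.mpr ⟨by linarith, ht₁⟩) _
  calc ∫ a, min (f a ^ 2) 1 ∂μ ≤ ∫ a, 20 * (∫ t in Ioc (0 : ℝ) 1, 1 - cos (t * f a)) ∂μ := by
        refine integral_mono hint (hprod.integral_prod_left.const_mul 20) fun a ↦ ?_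
        simpa [← intervalIntegral.integral_of_le zero_le_one, integral_one_sub_cos_mul]
          using min_sq_one_le_one_sub_sinc (f a)
    _ = 20 * ∫ t in Ioc (0 : ℝ) 1, ∫ a, (1 - cos (t * f a)) ∂μ := by
        rw [integral_const_mul, integral_integral_swap hprod]

lemma integral_min_sq_one_le_of_forall_integral_one_sub_cos_le (hf : Measurable f)
    (hint : Integrable (fun a ↦ min (f a ^ 2) 1) μ) {c : ℝ}
    (hc : ∀ t ∈ Ioc (0 : ℝ) 1, ∫ a, (1 - cos (t * f a)) ∂μ ≤ c) :
    ∫ a, min (f a ^ 2) 1 ∂μ ≤ 20 * c := by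
  -- Fubini needs σ-finiteness, which holds on the set carrying the integrable `min (f ^ 2) 1`.
  set s := hint.aefinStronglyMeasurable.sigmaFiniteSet
  have hs : MeasurableSet s := hint.aefinStronglyMeasurable.measurableSet
  have hf_compl : ∀ᵐ a ∂μ, a ∉ s → f a = 0 := by
    have := hint.aefinStronglyMeasurable.ae_eq_zero_compl
    rw [EventuallyEq, ae_restrict_iff' hs.compl] at this
    filter_upwards [this] with a ha has
    obtain ⟨hfa, -⟩ : f a = 0 ∧ |f a| ≤ 1 := by simpa [min_eq_iff] using ha has
    exact hfa
  have hcs : ∀ t ∈ Ioc (0 : ℝ) 1, ∫ a in s, (1 - cos (t * f a)) ∂μ ≤ c := fun t ht ↦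
    (setIntegral_le_integral (hint.one_sub_cos_mul hf (abs_le.mpr ⟨by linarith [ht.1], ht.2⟩))
      (.of_forall fun a ↦ by simp [cos_le_one])).trans (hc t ht)
  calc ∫ a, min (f a ^ 2) 1 ∂μ = ∫ a in s, min (f a ^ 2) 1 ∂μ :=
        (setIntegral_eq_integral_of_ae_compl_eq_zero (by
          filter_upwards [hf_compl] with a ha has; simp [ha has])).symm
    _ ≤ 20 * ∫ t in Ioc (0 : ℝ) 1, ∫ a in s, (1 - cos (t * f a)) ∂μ :=
        integral_min_sq_one_le_setIntegral_integral_one_sub_cos hf hint.restrict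
    _ ≤ 20 * ∫ t in Ioc (0 : ℝ) 1, c := by
        refine mul_le_mul_of_nonneg_left ?_ (by norm_num)
        refine integral_mono_of_nonneg (.of_forall fun t ↦ integral_nonneg fun a ↦ ?_)
          (integrable_const c) ((ae_restrict_iff' measurableSet_Ioc).mpr (.of_forall hcs))
        simp [cos_le_one]
    _ = 20 * c := by simp

end

theorem stmt13_general
    (U : Type*) [NormedAddCommGroup U] [NormedSpace ℝ U]
    [MeasurableSpace U] [BorelSpace U]
    (σ : Measure U)
    (h1 : ∀ w : U →L[ℝ] ℝ, Integrable (fun u => min ((w u) ^ 2) 1) σ)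
    (h2 : ContinuousAt (fun w : U →L[ℝ] ℝ => ∫ u, (1 - Real.cos (w u)) ∂σ) 0) :
    ∀ ε : ℝ, 0 < ε → ∃ δ : ℝ, 0 < δ ∧
      ∀ w : U →L[ℝ] ℝ, ‖w‖ ≤ δ → ∫ u, min ((w u) ^ 2) 1 ∂σ ≤ ε := by
  intro ε hε
  obtain ⟨δ, hδ, hsmall⟩ := Metric.continuousAt_iff.mp h2 (ε / 20) (by positivity)
  refine ⟨δ / 2, by positivity, fun w hw ↦ ?_⟩
  have hsegment : ∀ t ∈ Ioc (0 : ℝ) 1, ∫ u, (1 - cos (t * w u)) ∂σ ≤ ε / 20 := by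
    intro t ⟨ht₀, ht₁⟩
    have hdist : dist (t • w) 0 < δ := by
      rw [dist_zero_right, norm_smul, Real.norm_of_nonneg ht₀.le]
      nlinarith [norm_nonneg w]
    simpa [Real.dist_eq] using (abs_lt.mp (hsmall hdist)).2.le
  linarith [integral_min_sq_one_le_of_forall_integral_one_sub_cos_le w.continuous.measurable
    (h1 w) hsegment]

/-- Uniform smallness of `∫ (⟨u,u*⟩² ∧ 1) σ(du)` over small balls of the dual space,
given continuity at `0` of the symbol `u* ↦ ∫ (1 − cos⟨u,u*⟩) σ(du)`. -/
theorem stmt13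
    (U : Type*) [NormedAddCommGroup U] [NormedSpace ℝ U] [CompleteSpace U]
    [TopologicalSpace.SeparableSpace U] [MeasurableSpace U] [BorelSpace U]
    (σ : Measure U)
    (h1 : ∀ w : U →L[ℝ] ℝ, Integrable (fun u => min ((w u) ^ 2) 1) σ)
    (h2 : ContinuousAt (fun w : U →L[ℝ] ℝ => ∫ u, (1 - Real.cos (w u)) ∂σ) 0) :
    ∀ ε : ℝ, 0 < ε → ∃ δ : ℝ, 0 < δ ∧
      ∀ w : U →L[ℝ] ℝ, ‖w‖ ≤ δ → ∫ u, min ((w u) ^ 2) 1 ∂σ ≤ ε :=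
  stmt13_general U σ h1 h2
end
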